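/- arXiv:1909.01737 — 4 statements merged into one kernel-verified Lean document; each statement's English description precedes it below -/
import Mathlib

section
/- Let G act on the connected wsc Ω, and suppose each local space Vᵢ is a (complex, associative) algebra, so that V = V₀ ⊗ ⋯ ⊗ Vₙ is an algebra with componentwise multiplication. Then rank_{(Ω,G)}(vw) ≤ rank_{(Ω,G)}(v) · rank_{(Ω,G)}(w) for all v, w ∈ V. -/
/-!
Multiplying the local tensors of two `(Ω,G)`-decompositions pointwise, over the product
index set, gives an `(Ω,G)`-decomposition of the product, since elementary tensors multiply
componentwise. The only other point is the convention `0 * ⊤ = 0` in `ℕ∞`: it is covered by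
`rank v = 0 ↔ v = 0`, which holds as soon as there is a facet.
-/

open PiTensorProduct
open scoped TensorProduct

/-- The linear action of `g ∈ G` on `V = W ⊗ ⋯ ⊗ W` (n+1 factors) permuting the tensor
factors: on elementary tensors, the factor at site `g • i` of `g • v` is the factor of
`v` at site `i`. -/
noncomputable def permuteFactors {n : ℕ} {G : Type} [Group G]
    [MulAction G (Fin (n+1))] {W : Type} [AddCommGroup W] [Module ℂ W] (g : G) :
    (⨂[ℂ] _ : Fin (n+1), W) ≃ₗ[ℂ] ⨂[ℂ] _ : Fin (n+1), W :=
  PiTensorProduct.reindex ℂ (fun _ : Fin (n+1) => W) (MulAction.toPerm g)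

/-- An `(Ω,G)`-decomposition of `v` with index set `Fin s`. Here `F` is the multiset of
facets of the weighted simplicial complex `Ω`, `mem f i` means vertex `i` lies in the
facet `f`, and the local tensors `loc i : I^{F̃} → W` are required to (a) depend only on
the restriction of the index function to the facets containing `i`, (b) satisfy the
equivariance condition `v⁽ⁱ⁾_β = v^{[g•i]}_{ᵍβ}`, and (c) sum to `v`. -/
def IsOGDecomposition {n : ℕ} {F : Type} [Fintype F] [DecidableEq F]
    (G : Type) [Group G] [MulAction G (Fin (n+1))] [MulAction G F]
    (mem : F → Fin (n+1) → Prop)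
    {W : Type} [AddCommGroup W] [Module ℂ W]
    (s : ℕ) (loc : Fin (n+1) → (F → Fin s) → W)
    (v : ⨂[ℂ] _ : Fin (n+1), W) : Prop :=
  (∀ (i : Fin (n+1)) (α α' : F → Fin s),
      (∀ f : F, mem f i → α f = α' f) → loc i α = loc i α') ∧
  (∀ (g : G) (i : Fin (n+1)) (α : F → Fin s),
      loc (g • i) (fun f => α (g⁻¹ • f)) = loc i α) ∧
  v = ∑ α : F → Fin s, ⨂ₜ[ℂ] i, loc i α

/-- The `(Ω,G)`-rank of `v`: the smallest cardinality of an index set over which `v`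
admits an `(Ω,G)`-decomposition (`∞` if no such decomposition exists). -/
noncomputable def ogRank {n : ℕ} {F : Type} [Fintype F] [DecidableEq F]
    (G : Type) [Group G] [MulAction G (Fin (n+1))] [MulAction G F]
    (mem : F → Fin (n+1) → Prop)
    {W : Type} [AddCommGroup W] [Module ℂ W]
    (v : ⨂[ℂ] _ : Fin (n+1), W) : ℕ∞ :=
  sInf {r : ℕ∞ | ∃ s : ℕ, r = (s : ℕ∞) ∧
    ∃ loc : Fin (n+1) → (F → Fin s) → W, IsOGDecomposition G mem s loc v}

/-- `Fin (s * t)` stands for the product `I × J` of the index sets of two decompositions. -/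
def finMulArrowEquiv (F : Type) (s t : ℕ) : (F → Fin (s * t)) ≃ (F → Fin s) × (F → Fin t) :=
  (Equiv.arrowCongr (Equiv.refl F) finProdFinEquiv.symm).trans
    (Equiv.arrowProdEquivProdArrow F _ _)

namespace IsOGDecomposition

variable {n : ℕ} {F : Type} [Fintype F] [DecidableEq F]
    {G : Type} [Group G] [MulAction G (Fin (n+1))] [MulAction G F]
    {mem : F → Fin (n+1) → Prop}

lemma eq_zero_of_size_zero [Nonempty F] {W : Type} [AddCommGroup W] [Module ℂ W]
    {loc : Fin (n+1) → (F → Fin 0) → W} {v : ⨂[ℂ] _ : Fin (n+1), W}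
    (h : IsOGDecomposition G mem 0 loc v) : v = 0 := by
  rw [h.2.2, Finset.univ_eq_empty, Finset.sum_empty]

lemma zero_of_size_zero [Nonempty F] {W : Type} [AddCommGroup W] [Module ℂ W]
    (loc : Fin (n+1) → (F → Fin 0) → W) : IsOGDecomposition G mem 0 loc 0 :=
  ⟨fun _ α => isEmptyElim α, fun _ _ α => isEmptyElim α,
    by rw [Finset.univ_eq_empty, Finset.sum_empty]⟩

lemma mul {W : Type} [Ring W] [Algebra ℂ W] {s t : ℕ}
    {locV : Fin (n+1) → (F → Fin s) → W} {locW : Fin (n+1) → (F → Fin t) → W}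
    {v w : ⨂[ℂ] _ : Fin (n+1), W}
    (hv : IsOGDecomposition G mem s locV v) (hw : IsOGDecomposition G mem t locW w) :
    IsOGDecomposition G mem (s * t)
      (fun i α => locV i (finMulArrowEquiv F s t α).1 * locW i (finMulArrowEquiv F s t α).2)
      (v * w) := by
  obtain ⟨hv_local, hv_equivariant, rfl⟩ := hv
  obtain ⟨hw_local, hw_equivariant, rfl⟩ := hw
  refine ⟨fun i α α' h => ?_, fun g i α => ?_, ?_⟩
  · exact congrArg₂ (· * ·)
      (hv_local i _ _ fun f hf => by simp [finMulArrowEquiv, h f hf])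
      (hw_local i _ _ fun f hf => by simp [finMulArrowEquiv, h f hf])
  · exact congrArg₂ (· * ·) (hv_equivariant g i (finMulArrowEquiv F s t α).1)
      (hw_equivariant g i (finMulArrowEquiv F s t α).2)
  · rw [Finset.sum_mul_sum, ← Fintype.sum_prod_type']
    refine (Fintype.sum_equiv (finMulArrowEquiv F s t) _ _ fun α => ?_).symm
    exact (tprod_mul_tprod _ _).symm

end IsOGDecomposition

section ogRank

variable {n : ℕ} {F : Type} [Fintype F] [DecidableEq F]
    {G : Type} [Group G] [MulAction G (Fin (n+1))] [MulAction G F]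
    {mem : F → Fin (n+1) → Prop} {W : Type} [AddCommGroup W] [Module ℂ W]

lemma ogRank_le_of_isOGDecomposition {s : ℕ} {loc : Fin (n+1) → (F → Fin s) → W}
    {v : ⨂[ℂ] _ : Fin (n+1), W} (h : IsOGDecomposition G mem s loc v) :
    ogRank G mem v ≤ s :=
  sInf_le ⟨s, rfl, loc, h⟩

lemma exists_isOGDecomposition_of_ogRank_ne_top {v : ⨂[ℂ] _ : Fin (n+1), W}
    (h : ogRank G mem v ≠ ⊤) :
    ∃ (s : ℕ) (loc : Fin (n+1) → (F → Fin s) → W),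
      ogRank G mem v = s ∧ IsOGDecomposition G mem s loc v := by
  have hne : {r : ℕ∞ | ∃ s : ℕ, r = (s : ℕ∞) ∧
      ∃ loc : Fin (n+1) → (F → Fin s) → W, IsOGDecomposition G mem s loc v}.Nonempty :=
    Set.nonempty_iff_ne_empty.mpr fun hempty => h (by rw [ogRank, hempty, sInf_empty])
  obtain ⟨s, hs, loc, hloc⟩ := csInf_mem hne
  exact ⟨s, loc, hs, hloc⟩

lemma ogRank_eq_zero_iff [Nonempty F] {v : ⨂[ℂ] _ : Fin (n+1), W} :
    ogRank G mem v = 0 ↔ v = 0 := by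
  constructor
  · intro h
    obtain ⟨s, loc, hs, hloc⟩ := exists_isOGDecomposition_of_ogRank_ne_top (h ▸ ENat.zero_ne_top)
    obtain rfl : s = 0 := by exact_mod_cast hs.symm.trans h
    exact hloc.eq_zero_of_size_zero
  · rintro rfl
    exact nonpos_iff_eq_zero.mp <| ogRank_le_of_isOGDecomposition <|
      IsOGDecomposition.zero_of_size_zero fun _ _ => 0

end ogRank

theorem ogRank_mul_le_general
    {n : ℕ} {F : Type} [Fintype F] [DecidableEq F]
    (G : Type) [Group G] [MulAction G (Fin (n+1))] [MulAction G F]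
    (mem : F → Fin (n+1) → Prop)
    (hcover : ∀ i : Fin (n+1), ∃ f : F, mem f i)
    {W : Type} [Ring W] [Algebra ℂ W]
    (v w : ⨂[ℂ] _ : Fin (n+1), W) :
    ogRank G mem (v * w) ≤ ogRank G mem v * ogRank G mem w := by
  have : Nonempty F := let ⟨f, _⟩ := hcover 0; ⟨f⟩
  rcases eq_or_ne v 0 with rfl | hv0
  · rw [zero_mul, ogRank_eq_zero_iff.mpr rfl]
    exact zero_le
  rcases eq_or_ne w 0 with rfl | hw0
  · rw [mul_zero, ogRank_eq_zero_iff.mpr rfl]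
    exact zero_le
  rw [ne_eq, ← ogRank_eq_zero_iff (G := G) (mem := mem)] at hv0 hw0
  rcases eq_or_ne (ogRank G mem v) ⊤ with hv_top | hv_top
  · simp [hv_top, ENat.top_mul hw0]
  rcases eq_or_ne (ogRank G mem w) ⊤ with hw_top | hw_top
  · simp [hw_top, ENat.mul_top hv0]
  obtain ⟨s, locV, hs, hv⟩ := exists_isOGDecomposition_of_ogRank_ne_top hv_top
  obtain ⟨t, locW, ht, hw⟩ := exists_isOGDecomposition_of_ogRank_ne_top hw_top
  calc ogRank G mem (v * w) ≤ (s * t : ℕ) := ogRank_le_of_isOGDecomposition (hv.mul hw)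
    _ = ogRank G mem v * ogRank G mem w := by rw [hs, ht, Nat.cast_mul]

/-- Multiplicativity of the `(Ω,G)`-rank: if each local space is a complex associative
algebra `W`, so that `V = W ⊗ ⋯ ⊗ W` is an algebra with componentwise multiplication,
then `rank_{(Ω,G)}(v * w) ≤ rank_{(Ω,G)}(v) * rank_{(Ω,G)}(w)`. -/
theorem ogRank_mul_le
    {n : ℕ} {F : Type} [Fintype F] [DecidableEq F]
    (G : Type) [Group G] [MulAction G (Fin (n+1))] [MulAction G F]
    (mem : F → Fin (n+1) → Prop)
    (hcompat : ∀ (g : G) (f : F) (i : Fin (n+1)), mem f i → mem (g • f) (g • i))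
    (hfacet : ∀ f : F, ∃ i, mem f i)
    (hcover : ∀ i : Fin (n+1), ∃ f : F, mem f i)
    (hconn : ∀ i j : Fin (n+1),
      Relation.ReflTransGen (fun a b => ∃ f : F, mem f a ∧ mem f b) i j)
    {W : Type} [Ring W] [Algebra ℂ W]
    (v w : ⨂[ℂ] _ : Fin (n+1), W) :
    ogRank G mem (v * w) ≤ ogRank G mem v * ogRank G mem w :=
  ogRank_mul_le_general G mem hcover v w
end

section
/- Let G be a finite group acting freely on the connected wsc Ω, and let H ⊴ G be a normal subgroup. Then for every G-invariant v ∈ V, rank_{(Ω,G)}(v) ≤ |G/H| · rank_{(Ω,H)}(v). In particular rank_{(Ω,G)}(v) ≤ |G| · rank_Ω(v). -/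
open PiTensorProduct
open scoped TensorProduct

/-- An `(Ω,H)`-decomposition of `v` for a subgroup `H` of `G`, with index set `Fin s`:
the local tensors depend only on the restriction of the index function to the facets
containing the given vertex, are equivariant for all elements of `H`, and sum to `v`.
For `H = ⊤` this is an `(Ω,G)`-decomposition; for `H = ⊥` it is an `Ω`-decomposition. -/
def IsOGSubDecomposition {n : ℕ} {F : Type} [Fintype F] [DecidableEq F]
    {G : Type} [Group G] [MulAction G (Fin (n+1))] [MulAction G F]
    (H : Subgroup G) (mem : F → Fin (n+1) → Prop)
    {W : Type} [AddCommGroup W] [Module ℂ W]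
    (s : ℕ) (loc : Fin (n+1) → (F → Fin s) → W)
    (v : ⨂[ℂ] _ : Fin (n+1), W) : Prop :=
  (∀ (i : Fin (n+1)) (α α' : F → Fin s),
      (∀ f : F, mem f i → α f = α' f) → loc i α = loc i α') ∧
  (∀ g ∈ H, ∀ (i : Fin (n+1)) (α : F → Fin s),
      loc (g • i) (fun f => α (g⁻¹ • f)) = loc i α) ∧
  v = ∑ α : F → Fin s, ⨂ₜ[ℂ] i, loc i α

/-- The `(Ω,H)`-rank of `v`, for a subgroup `H` of `G`: the smallest cardinality of an
index set over which `v` admits an `(Ω,H)`-decomposition (`∞` if none exists). -/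
noncomputable def ogSubRank {n : ℕ} {F : Type} [Fintype F] [DecidableEq F]
    {G : Type} [Group G] [MulAction G (Fin (n+1))] [MulAction G F]
    (H : Subgroup G) (mem : F → Fin (n+1) → Prop)
    {W : Type} [AddCommGroup W] [Module ℂ W]
    (v : ⨂[ℂ] _ : Fin (n+1), W) : ℕ∞ :=
  sInf {r : ℕ∞ | ∃ s : ℕ, r = (s : ℕ∞) ∧
    ∃ loc : Fin (n+1) → (F → Fin s) → W, IsOGSubDecomposition H mem s loc v}

/-!
Freeness of the action on facets gives a `G`-equivariant map `φ : F → G`. Index the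
`(Ω,G)`-decomposition by `ι × G/H`, where `ι` indexes a given `(Ω,H)`-decomposition `loc` of `v`,
and twist the coset part of a labelling `β` to `φ f • (β f).2`. At a vertex `i` where this twisted
label is constant, equal to `q`, take the `q`-translate of `loc` (well defined because `loc` is
`H`-equivariant) scaled by a root `c` of `c ^ (n+1) = |G/H|⁻¹`; elsewhere take `0`. This is
`G`-equivariant, and by connectedness only globally constant twisted labels contribute to the sum:
each of the `|G/H|` constants contributes `c ^ (n+1)` times a translate of `v`, that is
`c ^ (n+1) • v` by `G`-invariance.
-/

theorem MulAction.exists_map_smul_eq_mul_of_free {G F : Type*} [Group G] [MulAction G F]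
    (hfree : ∀ (f : F) (g : G), g • f = f → g = 1) :
    ∃ φ : F → G, ∀ (g : G) (f : F), φ (g • f) = g * φ f := by
  let rep : F → F := fun f => (Quotient.mk (orbitRel G F) f).out
  have hrep : ∀ f, ∃ g : G, g • rep f = f := fun f =>
    mem_orbit_iff.mp ((orbitRel G F).symm (Quotient.mk_out (s := orbitRel G F) f))
  choose φ hφ using hrep
  refine ⟨φ, fun g f => ?_⟩
  have hrep_smul : rep (g • f) = rep f :=
    congrArg Quotient.out (Quotient.sound (mem_orbit_iff.mpr ⟨g, rfl⟩))
  refine (inv_mul_eq_one.mp (hfree (rep f) _ ?_)).symm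
  calc ((g * φ f)⁻¹ * φ (g • f)) • rep f = (g * φ f)⁻¹ • φ (g • f) • rep (g • f) := by
        rw [mul_smul, hrep_smul]
    _ = (φ f)⁻¹ • f := by rw [hφ, mul_inv_rev, mul_smul, inv_smul_smul]
    _ = rep f := inv_smul_eq_iff.mpr (hφ f).symm

theorem exists_eq_const_of_forall_exists_eq_on_star {V F X : Type*} [Nonempty V]
    {mem : F → V → Prop} (hfacet : ∀ f, ∃ i, mem f i)
    (hconn : ∀ i j, Relation.ReflTransGen (fun a b => ∃ f : F, mem f a ∧ mem f b) i j)
    {κ : F → X} (hκ : ∀ i, ∃ q, ∀ f, mem f i → κ f = q) : ∃ q, ∀ f, κ f = q := by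
  choose q hq using hκ
  obtain ⟨i₀⟩ := ‹Nonempty V›
  have hq_eq : ∀ j, q j = q i₀ := fun j => by
    induction hconn i₀ j with
    | refl => rfl
    | tail _ hbc ih =>
      obtain ⟨f, hb, hc⟩ := hbc
      rw [← hq _ f hc, hq _ f hb, ih]
  refine ⟨q i₀, fun f => ?_⟩
  obtain ⟨j, hj⟩ := hfacet f
  rw [hq j f hj, hq_eq]

theorem tprod_const_smul {ι R M : Type*} [Fintype ι] [CommSemiring R] [AddCommMonoid M]
    [Module R M] (c : R) (x : ι → M) :
    (⨂ₜ[R] i, c • x i) = c ^ Fintype.card ι • ⨂ₜ[R] i, x i := by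
  simpa using MultilinearMap.map_smul_univ (tprod R) (fun _ => c) x

theorem permuteFactors_tprod {n : ℕ} {G : Type} [Group G] [MulAction G (Fin (n+1))]
    {W : Type} [AddCommGroup W] [Module ℂ W] (g : G) (x : Fin (n+1) → W) :
    permuteFactors g (⨂ₜ[ℂ] i, x i) = ⨂ₜ[ℂ] i, x (g⁻¹ • i) := by
  simp [permuteFactors, reindex_tprod]

section Translate

variable {n : ℕ} {G : Type} [Group G] [MulAction G (Fin (n+1))] {F : Type} [MulAction G F]
  {ι W : Type}

def translateLoc (loc : Fin (n+1) → (F → ι) → W) (g : G) : Fin (n+1) → (F → ι) → W :=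
  fun i α => loc (g⁻¹ • i) (fun f => α (g • f))

theorem translateLoc_smul_apply (loc : Fin (n+1) → (F → ι) → W) (g g' : G) (i : Fin (n+1))
    (α : F → ι) :
    translateLoc loc g (g' • i) (fun f => α (g'⁻¹ • f)) = translateLoc loc (g'⁻¹ * g) i α := by
  simp only [translateLoc, mul_inv_rev, inv_inv, mul_smul]

theorem forall_mem_smul_iff {mem : F → Fin (n+1) → Prop}
    (hcompat : ∀ (g : G) (f : F) (i : Fin (n+1)), mem f i → mem (g • f) (g • i))
    (g : G) (i : Fin (n+1)) {P : F → Prop} :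
    (∀ f, mem f (g • i) → P (g⁻¹ • f)) ↔ ∀ f, mem f i → P f := by
  refine ⟨fun hP f hf => ?_, fun hP f hf => hP _ ?_⟩
  · simpa using hP _ (hcompat g f i hf)
  · simpa using hcompat g⁻¹ f _ hf

end Translate

section Decomposition

variable {n : ℕ} {G : Type} [Group G] [MulAction G (Fin (n+1))]
  {W : Type} [AddCommGroup W] [Module ℂ W]
  {F : Type} [Fintype F] [DecidableEq F] [MulAction G F] {mem : F → Fin (n+1) → Prop}
  {ι : Type} [Fintype ι]

structure IsOGDecomposition_s12 (H : Subgroup G) (mem : F → Fin (n+1) → Prop)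
    (loc : Fin (n+1) → (F → ι) → W) (v : ⨂[ℂ] _ : Fin (n+1), W) : Prop where
  congr_of_eqOn : ∀ i (α α' : F → ι), (∀ f, mem f i → α f = α' f) → loc i α = loc i α'
  smul_eq : ∀ g ∈ H, ∀ i (α : F → ι), loc (g • i) (fun f => α (g⁻¹ • f)) = loc i α
  eq_sum : v = ∑ α, ⨂ₜ[ℂ] i, loc i α

theorem isOGSubDecomposition_iff {H : Subgroup G} {s : ℕ} {loc : Fin (n+1) → (F → Fin s) → W}
    {v : ⨂[ℂ] _ : Fin (n+1), W} :
    IsOGSubDecomposition H mem s loc v ↔ IsOGDecomposition_s12 H mem loc v :=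
  ⟨fun ⟨h₁, h₂, h₃⟩ => ⟨h₁, h₂, h₃⟩, fun ⟨h₁, h₂, h₃⟩ => ⟨h₁, h₂, h₃⟩⟩

theorem exists_isOGSubDecomposition_of_ogSubRank_ne_top {H : Subgroup G}
    {v : ⨂[ℂ] _ : Fin (n+1), W} (h : ogSubRank H mem v ≠ ⊤) :
    ∃ s loc, IsOGSubDecomposition H mem s loc v ∧ ogSubRank H mem v = s := by
  have hne : {r : ℕ∞ | ∃ s : ℕ, r = s ∧
      ∃ loc : Fin (n+1) → (F → Fin s) → W, IsOGSubDecomposition H mem s loc v}.Nonempty :=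
    Set.nonempty_iff_ne_empty.2 fun he => h (by rw [ogSubRank, he, sInf_empty])
  obtain ⟨s, hs, loc, hloc⟩ := csInf_mem hne
  exact ⟨s, loc, hloc, hs⟩

namespace IsOGDecomposition_s12

variable {H : Subgroup G} {loc : Fin (n+1) → (F → ι) → W} {v : ⨂[ℂ] _ : Fin (n+1), W}

theorem reindex (h : IsOGDecomposition_s12 H mem loc v) {κ : Type} [Fintype κ] (e : ι ≃ κ) :
    IsOGDecomposition_s12 H mem (fun i β => loc i (e.symm ∘ β)) v where
  congr_of_eqOn i _ _ hβ := h.congr_of_eqOn i _ _ fun f hf => congrArg e.symm (hβ f hf)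
  smul_eq g hg i β := h.smul_eq g hg i (e.symm ∘ β)
  eq_sum := h.eq_sum.trans <|
    (Fintype.sum_equiv ((Equiv.refl F).arrowCongr e.symm) _ _ fun _ => rfl).symm

theorem ogSubRank_le_card (h : IsOGDecomposition_s12 H mem loc v) :
    ogSubRank H mem v ≤ Fintype.card ι :=
  sInf_le ⟨_, rfl, _, isOGSubDecomposition_iff.2 (h.reindex (Fintype.equivFin ι))⟩

theorem translateLoc_congr (h : IsOGDecomposition_s12 H mem loc v)
    (hcompat : ∀ (g : G) (f : F) (i : Fin (n+1)), mem f i → mem (g • f) (g • i))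
    (g : G) (i : Fin (n+1)) {α α' : F → ι} (hα : ∀ f, mem f i → α f = α' f) :
    translateLoc loc g i α = translateLoc loc g i α' :=
  h.congr_of_eqOn _ _ _ fun f hf => hα _ (by simpa using hcompat g f _ hf)

theorem translateLoc_mul_of_mem (h : IsOGDecomposition_s12 H mem loc v) (g : G) {k : G}
    (hk : k ∈ H) : translateLoc loc (g * k) = translateLoc loc g := by
  funext i α
  simpa [translateLoc, mul_smul] using
    h.smul_eq k⁻¹ (inv_mem hk) (g⁻¹ • i) (fun f => α (g • f))

theorem translateLoc_out_mk (h : IsOGDecomposition_s12 H mem loc v) (g : G) :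
    translateLoc loc (QuotientGroup.mk g : G ⧸ H).out = translateLoc loc g := by
  obtain ⟨k, hk⟩ := QuotientGroup.mk_out_eq_mul H g
  rw [hk, h.translateLoc_mul_of_mem g k.2]

theorem sum_tprod_translateLoc (h : IsOGDecomposition_s12 H mem loc v) (g : G) :
    ∑ α, (⨂ₜ[ℂ] i, translateLoc loc g i α) = permuteFactors g v := by
  rw [h.eq_sum, map_sum]
  simp only [permuteFactors_tprod]
  exact Fintype.sum_equiv ((MulAction.toPerm g).arrowCongr (Equiv.refl ι)).symm _ _
    fun _ => rfl

end IsOGDecomposition_s12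

end Decomposition

section CosetLabel

variable {G : Type} [Group G] {F ι : Type} {H : Subgroup G}

def cosetLabel (φ : F → G) (β : F → ι × G ⧸ H) (f : F) : G ⧸ H := φ f • (β f).2

theorem cosetLabel_comp_smul [MulAction G F] {φ : F → G}
    (hφ : ∀ (g : G) (f : F), φ (g • f) = g * φ f) (β : F → ι × G ⧸ H) (g : G) (f : F) :
    cosetLabel φ (fun f => β (g⁻¹ • f)) f = g • cosetLabel φ β (g⁻¹ • f) := by
  rw [cosetLabel, cosetLabel, ← mul_smul, ← hφ, smul_inv_smul]

theorem sum_ite_cosetLabel_eq [Fintype F] [DecidableEq F] [Fintype ι] [Fintype (G ⧸ H)]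
    {φ : F → G} {M : Type} [AddCommMonoid M] (q : G ⧸ H)
    [DecidablePred fun β : F → ι × G ⧸ H => ∀ f, cosetLabel φ β f = q] (Φ : (F → ι) → M) :
    ∑ β : F → ι × G ⧸ H, (if ∀ f, cosetLabel φ β f = q then Φ (fun f => (β f).1) else 0) =
      ∑ α, Φ α := by
  rw [← Finset.sum_filter]
  refine Finset.sum_nbij' (fun β f => (β f).1) (fun α f => (α f, (φ f)⁻¹ • q))
    (by simp) (fun _ _ => Finset.mem_filter.2 ⟨Finset.mem_univ _, fun _ => smul_inv_smul _ _⟩)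
    (fun β hβ => ?_) (by simp) (by simp)
  funext f
  rw [Finset.mem_filter] at hβ
  exact Prod.ext rfl (by rw [← hβ.2 f, cosetLabel, inv_smul_smul])

end CosetLabel

section Lift

variable {n : ℕ} {G : Type} [Group G] [MulAction G (Fin (n+1))]
  {W : Type} [AddCommGroup W] [Module ℂ W]
  {F : Type} [MulAction G F] {mem : F → Fin (n+1) → Prop}
  {ι : Type} {H : Subgroup G} [Fintype (G ⧸ H)]

open Classical in
noncomputable def liftLoc (mem : F → Fin (n+1) → Prop) (loc : Fin (n+1) → (F → ι) → W)
    (φ : F → G) (c : ℂ) (i : Fin (n+1)) (β : F → ι × G ⧸ H) : W :=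
  ∑ q : G ⧸ H, if ∀ f, mem f i → cosetLabel φ β f = q then
    c • translateLoc loc q.out i (fun f => (β f).1) else 0

variable {loc : Fin (n+1) → (F → ι) → W} {φ : F → G} {c : ℂ}

theorem liftLoc_eq_of_forall_mem {i : Fin (n+1)} (hi : ∃ f, mem f i) {β : F → ι × G ⧸ H}
    {q : G ⧸ H} (hq : ∀ f, mem f i → cosetLabel φ β f = q) :
    liftLoc mem loc φ c i β = c • translateLoc loc q.out i (fun f => (β f).1) := by
  obtain ⟨f, hf⟩ := hi
  refine (Finset.sum_eq_single q (fun q' _ hq' => if_neg fun h => hq' ?_) (by simp)).trans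
    (if_pos hq)
  rw [← h f hf, hq f hf]

theorem liftLoc_eq_zero {i : Fin (n+1)} {β : F → ι × G ⧸ H}
    (h : ∀ q, ¬ ∀ f, mem f i → cosetLabel φ β f = q) : liftLoc mem loc φ c i β = 0 :=
  Finset.sum_eq_zero fun q _ => if_neg (h q)

open Classical in
theorem tprod_liftLoc (hfacet : ∀ f : F, ∃ i, mem f i)
    (hcover : ∀ i : Fin (n+1), ∃ f : F, mem f i)
    (hconn : ∀ i j : Fin (n+1),
      Relation.ReflTransGen (fun a b => ∃ f : F, mem f a ∧ mem f b) i j)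
    (β : F → ι × G ⧸ H) :
    (⨂ₜ[ℂ] i, liftLoc mem loc φ c i β) = ∑ q, if ∀ f, cosetLabel φ β f = q then
      c ^ (n+1) • ⨂ₜ[ℂ] i, translateLoc loc q.out i (fun f => (β f).1) else 0 := by
  by_cases hconst : ∃ q, ∀ f, cosetLabel φ β f = q
  · obtain ⟨q, hq⟩ := hconst
    obtain ⟨f₀, -⟩ := hcover 0
    rw [Finset.sum_eq_single q (fun q' _ hq' => if_neg fun h => hq' ((h f₀).symm.trans (hq f₀)))
      (by simp), if_pos hq]
    calc _ = ⨂ₜ[ℂ] i, c • translateLoc loc q.out i (fun f => (β f).1) :=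
          congrArg _ (funext fun i => liftLoc_eq_of_forall_mem (hcover i) fun f _ => hq f)
      _ = _ := by rw [tprod_const_smul, Fintype.card_fin]
  · obtain ⟨i, hi⟩ : ∃ i, ∀ q, ¬ ∀ f, mem f i → cosetLabel φ β f = q := by
      by_contra! h
      exact hconst (exists_eq_const_of_forall_exists_eq_on_star hfacet hconn h)
    rw [Finset.sum_eq_zero fun q _ => if_neg fun hq => hconst ⟨q, hq⟩]
    exact MultilinearMap.map_coord_zero _ i (liftLoc_eq_zero hi)

variable [Fintype F] [DecidableEq F] [Fintype ι] {v : ⨂[ℂ] _ : Fin (n+1), W}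

theorem IsOGDecomposition_s12.lift (h : IsOGDecomposition_s12 H mem loc v)
    (hcompat : ∀ (g : G) (f : F) (i : Fin (n+1)), mem f i → mem (g • f) (g • i))
    (hfacet : ∀ f : F, ∃ i, mem f i)
    (hcover : ∀ i : Fin (n+1), ∃ f : F, mem f i)
    (hconn : ∀ i j : Fin (n+1),
      Relation.ReflTransGen (fun a b => ∃ f : F, mem f a ∧ mem f b) i j)
    (hinv : ∀ g : G, permuteFactors g v = v)
    (hφ : ∀ (g : G) (f : F), φ (g • f) = g * φ f)
    (hc : (Nat.card (G ⧸ H) : ℂ) * c ^ (n+1) = 1) :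
    IsOGDecomposition_s12 (⊤ : Subgroup G) mem (liftLoc (H := H) mem loc φ c) v where
  congr_of_eqOn i β β' hβ := by
    classical
    have hlabel : ∀ f, mem f i → cosetLabel φ β f = cosetLabel φ β' f := fun f hf => by
      rw [cosetLabel, cosetLabel, hβ f hf]
    refine Finset.sum_congr rfl fun q _ => ?_
    rw [h.translateLoc_congr hcompat q.out i fun f hf => congrArg Prod.fst (hβ f hf)]
    simp +contextual only [hlabel]
    congr 1
  smul_eq g _ i β := by
    classical
    refine (Fintype.sum_equiv (MulAction.toPerm g) _ _ fun q => ?_).symm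
    have hq : (QuotientGroup.mk (g⁻¹ * (g • q).out) : G ⧸ H) = q := by
      rw [← smul_eq_mul, MulAction.Quotient.coe_smul_out, inv_smul_smul]
    simp only [MulAction.toPerm_apply, cosetLabel_comp_smul hφ, smul_left_cancel_iff,
      forall_mem_smul_iff hcompat g i (P := fun f => cosetLabel φ β f = q)]
    rw [translateLoc_smul_apply loc (g • q).out g i (fun f => (β f).1),
      ← h.translateLoc_out_mk (g⁻¹ * (g • q).out), hq]
    congr 1
  eq_sum := by
    symm
    calc ∑ β, (⨂ₜ[ℂ] i, liftLoc mem loc φ c i β)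
        = ∑ q : G ⧸ H, ∑ α, c ^ (n+1) • ⨂ₜ[ℂ] i, translateLoc loc q.out i α := by
          simp_rw [tprod_liftLoc hfacet hcover hconn]
          rw [Finset.sum_comm]
          refine Finset.sum_congr rfl fun q _ => ?_
          classical
          -- the two sides differ only in their `Decidable` instances
          convert sum_ite_cosetLabel_eq q fun α => c ^ (n+1) • ⨂ₜ[ℂ] i, translateLoc loc q.out i α
      _ = ∑ q : G ⧸ H, c ^ (n+1) • v := by
          simp_rw [← Finset.smul_sum, h.sum_tprod_translateLoc, hinv]
      _ = v := by
          rw [Finset.sum_const, Finset.card_univ, ← Nat.cast_smul_eq_nsmul ℂ, smul_smul,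
            ← Nat.card_eq_fintype_card, hc, one_smul]

end Lift

theorem ogSubRank_top_le_card_quotient_mul {n : ℕ} {F : Type} [Fintype F] [DecidableEq F]
    {G : Type} [Group G] [MulAction G (Fin (n+1))] [MulAction G F]
    {mem : F → Fin (n+1) → Prop}
    (hcompat : ∀ (g : G) (f : F) (i : Fin (n+1)), mem f i → mem (g • f) (g • i))
    (hfacet : ∀ f : F, ∃ i, mem f i)
    (hcover : ∀ i : Fin (n+1), ∃ f : F, mem f i)
    (hconn : ∀ i j : Fin (n+1),
      Relation.ReflTransGen (fun a b => ∃ f : F, mem f a ∧ mem f b) i j)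
    (hfree : ∀ (f : F) (g : G), g • f = f → g = 1)
    (H : Subgroup G) [Finite (G ⧸ H)]
    {W : Type} [AddCommGroup W] [Module ℂ W] {v : ⨂[ℂ] _ : Fin (n+1), W}
    (hinv : ∀ g : G, permuteFactors g v = v) :
    ogSubRank (⊤ : Subgroup G) mem v ≤ (Nat.card (G ⧸ H) : ℕ∞) * ogSubRank H mem v := by
  have hcard : Nat.card (G ⧸ H) ≠ 0 := Nat.card_pos.ne'
  by_cases htop : ogSubRank H mem v = ⊤
  · rw [htop, ENat.mul_top (by exact_mod_cast hcard)]
    exact le_top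
  obtain ⟨s, loc, hloc, hs⟩ := exists_isOGSubDecomposition_of_ogSubRank_ne_top htop
  have : Fintype (G ⧸ H) := Fintype.ofFinite _
  obtain ⟨φ, hφ⟩ := MulAction.exists_map_smul_eq_mul_of_free hfree
  obtain ⟨c, hc⟩ := IsAlgClosed.exists_pow_nat_eq (Nat.card (G ⧸ H) : ℂ)⁻¹ n.succ_pos
  have hlift := (isOGSubDecomposition_iff.1 hloc).lift hcompat hfacet hcover hconn hinv hφ
    (by rw [hc, mul_inv_cancel₀ (by exact_mod_cast hcard)])
  calc ogSubRank ⊤ mem v ≤ Fintype.card (Fin s × G ⧸ H) := hlift.ogSubRank_le_card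
    _ = Nat.card (G ⧸ H) * ogSubRank H mem v := by
      rw [hs, Fintype.card_prod, Fintype.card_fin, ← Nat.card_eq_fintype_card, mul_comm,
        Nat.cast_mul]

theorem ogRank_le_index_mul_subgroup_rank_general
    {n : ℕ} {F : Type} [Fintype F] [DecidableEq F]
    {G : Type} [Group G] [Fintype G] [MulAction G (Fin (n+1))] [MulAction G F]
    (mem : F → Fin (n+1) → Prop)
    (hcompat : ∀ (g : G) (f : F) (i : Fin (n+1)), mem f i → mem (g • f) (g • i))
    (hfacet : ∀ f : F, ∃ i, mem f i)
    (hcover : ∀ i : Fin (n+1), ∃ f : F, mem f i)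
    (hconn : ∀ i j : Fin (n+1),
      Relation.ReflTransGen (fun a b => ∃ f : F, mem f a ∧ mem f b) i j)
    (hfree : ∀ (f : F) (g : G), g • f = f → g = 1)
    (H : Subgroup G)
    {W : Type} [AddCommGroup W] [Module ℂ W]
    (v : ⨂[ℂ] _ : Fin (n+1), W)
    (hinv : ∀ g : G, permuteFactors g v = v) :
    ogSubRank (⊤ : Subgroup G) mem v ≤ (Nat.card (G ⧸ H) : ℕ∞) * ogSubRank H mem v ∧
    ogSubRank (⊤ : Subgroup G) mem v ≤
      (Nat.card G : ℕ∞) * ogSubRank (⊥ : Subgroup G) mem v := by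
  have key := fun K : Subgroup G =>
    ogSubRank_top_le_card_quotient_mul hcompat hfacet hcover hconn hfree K hinv
  refine ⟨key H, ?_⟩
  rw [← Subgroup.index_bot]
  exact key ⊥

/-- Let the finite group `G` act freely on the connected wsc `Ω`, and let `H` be a
normal subgroup of `G`. Then for every `G`-invariant `v`,
`rank_{(Ω,G)}(v) ≤ |G/H| · rank_{(Ω,H)}(v)`; in particular (taking `H = {e}`)
`rank_{(Ω,G)}(v) ≤ |G| · rank_Ω(v)`. -/
theorem ogRank_le_index_mul_subgroup_rank
    {n : ℕ} {F : Type} [Fintype F] [DecidableEq F]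
    {G : Type} [Group G] [Fintype G] [MulAction G (Fin (n+1))] [MulAction G F]
    (mem : F → Fin (n+1) → Prop)
    (hcompat : ∀ (g : G) (f : F) (i : Fin (n+1)), mem f i → mem (g • f) (g • i))
    (hfacet : ∀ f : F, ∃ i, mem f i)
    (hcover : ∀ i : Fin (n+1), ∃ f : F, mem f i)
    (hconn : ∀ i j : Fin (n+1),
      Relation.ReflTransGen (fun a b => ∃ f : F, mem f a ∧ mem f b) i j)
    (hfree : ∀ (f : F) (g : G), g • f = f → g = 1)
    (H : Subgroup G) (hnormal : H.Normal)
    {W : Type} [AddCommGroup W] [Module ℂ W]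
    (v : ⨂[ℂ] _ : Fin (n+1), W)
    (hinv : ∀ g : G, permuteFactors g v = v) :
    ogSubRank (⊤ : Subgroup G) mem v ≤ (Nat.card (G ⧸ H) : ℕ∞) * ogSubRank H mem v ∧
    ogSubRank (⊤ : Subgroup G) mem v ≤
      (Nat.card G : ℕ∞) * ogSubRank (⊥ : Subgroup G) mem v :=
  ogRank_le_index_mul_subgroup_rank_general mem hcompat hfacet hcover hconn hfree H v hinv
end

section
/- Let Ω be a connected wsc, m ∈ ℕ positive, and mΩ the wsc with all facet weights multiplied by m. Then for every v ∈ V: rank_{mΩ}(v) ≤ ⌈rank_Ω(v)^{1/m}⌉ and rank_Ω(v) ≤ rank_{mΩ}(v)^m. -/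
/-!
Currying and `(Fin m → Fin s) ≃ Fin (s ^ m)` identify index functions `F × Fin m → Fin s` of
`mΩ` with index functions `F → Fin (s ^ m)` of `Ω`, and two of them agree on the facets at a
vertex exactly when their images do; so `mΩ`-decompositions over `Fin s` are `Ω`-decompositions over
`Fin (s ^ m)`. Since every facet contains a vertex, a decomposition over `Fin s` can be padded
with zero terms to one over any larger `Fin t`, hence `rank_{mΩ} v ≤ s ↔ rank_Ω v ≤ s ^ m`.
-/

open PiTensorProduct
open scoped TensorProduct

/-- An `Ω`-decomposition of `v` with index set `Fin s`, for the wsc with facet multiset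
`F` and membership relation `mem`: the local tensors depend only on the restriction of
the index function to the facets containing the given vertex, and sum to `v`. -/
def IsOmegaDecomposition {n : ℕ} {F : Type} [Fintype F] [DecidableEq F]
    (mem : F → Fin (n+1) → Prop)
    {V : Fin (n+1) → Type} [∀ i, AddCommGroup (V i)] [∀ i, Module ℂ (V i)]
    (s : ℕ) (loc : (i : Fin (n+1)) → (F → Fin s) → V i)
    (v : ⨂[ℂ] i, V i) : Prop :=
  (∀ (i : Fin (n+1)) (α α' : F → Fin s),
      (∀ f : F, mem f i → α f = α' f) → loc i α = loc i α') ∧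
    v = ∑ α : F → Fin s, ⨂ₜ[ℂ] i, loc i α

/-- The `Ω`-rank of `v`: the smallest cardinality of an index set over which `v` admits
an `Ω`-decomposition (`∞` if none exists). -/
noncomputable def omegaRank {n : ℕ} {F : Type} [Fintype F] [DecidableEq F]
    (mem : F → Fin (n+1) → Prop)
    {V : Fin (n+1) → Type} [∀ i, AddCommGroup (V i)] [∀ i, Module ℂ (V i)]
    (v : ⨂[ℂ] i, V i) : ℕ∞ :=
  sInf {r : ℕ∞ | ∃ s : ℕ, r = (s : ℕ∞) ∧
    ∃ loc : (i : Fin (n+1)) → (F → Fin s) → V i, IsOmegaDecomposition mem s loc v}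

namespace IsOmegaDecomposition

variable {n : ℕ} {F G : Type} [Fintype F] [DecidableEq F] [Fintype G] [DecidableEq G]
  {mem : F → Fin (n+1) → Prop} {mem' : G → Fin (n+1) → Prop}
  {V : Fin (n+1) → Type} [∀ i, AddCommGroup (V i)] [∀ i, Module ℂ (V i)]
  {v : ⨂[ℂ] i, V i}

theorem of_equiv {s t : ℕ} {loc : (i : Fin (n+1)) → (F → Fin s) → V i}
    (h : IsOmegaDecomposition mem s loc v) (E : (F → Fin s) ≃ (G → Fin t))
    (hE : ∀ i α α', Set.EqOn (E α) (E α') {g | mem' g i} → Set.EqOn α α' {f | mem f i}) :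
    IsOmegaDecomposition mem' t (fun i β => loc i (E.symm β)) v := by
  refine ⟨fun i β β' hββ' => h.1 i _ _ fun f hf => hE i _ _ ?_ hf, ?_⟩
  · rwa [E.apply_symm_apply, E.apply_symm_apply]
  · rw [h.2]
    exact (E.symm.sum_comp fun α => ⨂ₜ[ℂ] i, loc i α).symm

/-- Padding with zero terms: every index function into `Fin t` that is not valued in `Fin s`
has a facet on which it leaves `Fin s`, and a vertex of that facet gets local tensor `0`. -/
theorem exists_of_le (hfacet : ∀ f : F, ∃ i, mem f i) {s t : ℕ} (hst : s ≤ t)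
    {loc : (i : Fin (n+1)) → (F → Fin s) → V i} (h : IsOmegaDecomposition mem s loc v) :
    ∃ loc' : (i : Fin (n+1)) → (F → Fin t) → V i, IsOmegaDecomposition mem t loc' v := by
  classical
  let lift : (F → Fin s) → (F → Fin t) := fun α => Fin.castLE hst ∘ α
  have lift_injective : Function.Injective lift := fun α α' hαα' =>
    funext fun f => Fin.castLE_injective hst (congrFun hαα' f)
  let Lifts (i : Fin (n+1)) (β : F → Fin t) (α : F → Fin s) : Prop :=
    Set.EqOn β (lift α) {f | mem f i}
  let loc' (i : Fin (n+1)) (β : F → Fin t) : V i :=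
    if hβ : ∃ α, Lifts i β α then loc i hβ.choose else 0
  have loc'_eq {i β α} (hα : Lifts i β α) : loc' i β = loc i α := by
    have hβ : ∃ α, Lifts i β α := ⟨α, hα⟩
    simp only [loc', dif_pos hβ]
    exact h.1 i _ _ fun f hf =>
      Fin.castLE_injective hst ((hβ.choose_spec hf).symm.trans (hα hf))
  have lifts_congr {i β β' α} (hββ' : Set.EqOn β β' {f | mem f i}) :
      Lifts i β α ↔ Lifts i β' α :=
    ⟨fun hα f hf => (hββ' hf).symm.trans (hα hf), fun hα f hf => (hββ' hf).trans (hα hf)⟩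
  refine ⟨loc', fun i β β' hββ' => ?_, ?_⟩
  · by_cases hβ : ∃ α, Lifts i β α
    · obtain ⟨α, hα⟩ := hβ
      rw [loc'_eq hα, loc'_eq ((lifts_congr hββ').1 hα)]
    · have hβ' : ¬ ∃ α, Lifts i β' α := fun ⟨α, hα⟩ => hβ ⟨α, (lifts_congr hββ').2 hα⟩
      simp only [loc', dif_neg hβ, dif_neg hβ']
  · rw [h.2]
    refine Fintype.sum_of_injective lift lift_injective _ _ (fun β hβ => ?_)
      (fun α => congrArg _ (funext fun i => (loc'_eq fun _ _ => rfl).symm))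
    obtain ⟨f, hf⟩ : ∃ f, ∀ a : Fin s, Fin.castLE hst a ≠ β f := by
      by_contra! hall
      choose α hα using hall
      exact hβ ⟨α, funext hα⟩
    obtain ⟨i, hi⟩ := hfacet f
    refine MultilinearMap.map_coord_zero _ i (dif_neg ?_)
    rintro ⟨α, hα⟩
    exact hf (α f) (hα hi).symm

end IsOmegaDecomposition

section Rank

variable {n : ℕ} {F : Type} [Fintype F] [DecidableEq F] {mem : F → Fin (n+1) → Prop}
  {V : Fin (n+1) → Type} [∀ i, AddCommGroup (V i)] [∀ i, Module ℂ (V i)]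
  {v : ⨂[ℂ] i, V i}

theorem omegaRank_le_of_isOmegaDecomposition {s : ℕ} {loc : (i : Fin (n+1)) → (F → Fin s) → V i}
    (h : IsOmegaDecomposition mem s loc v) : omegaRank mem v ≤ s :=
  sInf_le ⟨s, rfl, loc, h⟩

theorem exists_isOmegaDecomposition_of_omegaRank_ne_top (h : omegaRank mem v ≠ ⊤) :
    ∃ s : ℕ, omegaRank mem v = s ∧
      ∃ loc : (i : Fin (n+1)) → (F → Fin s) → V i, IsOmegaDecomposition mem s loc v := by
  have hne : {r : ℕ∞ | ∃ s : ℕ, r = (s : ℕ∞) ∧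
      ∃ loc : (i : Fin (n+1)) → (F → Fin s) → V i, IsOmegaDecomposition mem s loc v}.Nonempty :=
    Set.nonempty_iff_ne_empty.2 fun hempty => h (by rw [omegaRank, hempty, sInf_empty])
  exact csInf_mem hne

theorem omegaRank_le_iff (hfacet : ∀ f : F, ∃ i, mem f i) {s : ℕ} :
    omegaRank mem v ≤ s ↔
      ∃ loc : (i : Fin (n+1)) → (F → Fin s) → V i, IsOmegaDecomposition mem s loc v := by
  refine ⟨fun hle => ?_, fun ⟨_, h⟩ => omegaRank_le_of_isOmegaDecomposition h⟩
  obtain ⟨r, hr, loc, h⟩ := exists_isOmegaDecomposition_of_omegaRank_ne_top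
    (ne_top_of_le_ne_top (ENat.natCast_ne_top s) hle)
  exact h.exists_of_le hfacet (by exact_mod_cast hr ▸ hle)

end Rank

section Replicate

variable {n : ℕ} {F : Type} {mem : F → Fin (n+1) → Prop}

def replicateEquiv (F : Type) (m s : ℕ) : (F → Fin (s ^ m)) ≃ (F × Fin m → Fin s) :=
  (Equiv.arrowCongr (Equiv.refl F) finFunctionFinEquiv.symm).trans
    (Equiv.curry F (Fin m) (Fin s)).symm

@[simp]
theorem replicateEquiv_apply {m s : ℕ} (α : F → Fin (s ^ m)) (p : F × Fin m) :
    replicateEquiv F m s α p = finFunctionFinEquiv.symm (α p.1) p.2 :=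
  rfl

theorem eqOn_replicateEquiv_iff {m s : ℕ} {i : Fin (n+1)} {α α' : F → Fin (s ^ m)} :
    Set.EqOn (replicateEquiv F m s α) (replicateEquiv F m s α') {p | mem p.1 i} ↔
      Set.EqOn α α' {f | mem f i} := by
  refine ⟨fun h f hf => finFunctionFinEquiv.symm.injective (funext fun k => h (x := (f, k)) hf),
    fun h p hp => ?_⟩
  simp only [replicateEquiv_apply, h hp]

variable [Fintype F] [DecidableEq F]
  {V : Fin (n+1) → Type} [∀ i, AddCommGroup (V i)] [∀ i, Module ℂ (V i)]
  {v : ⨂[ℂ] i, V i}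

theorem exists_isOmegaDecomposition_replicate_iff {m s : ℕ} :
    (∃ loc : (i : Fin (n+1)) → (F → Fin (s ^ m)) → V i, IsOmegaDecomposition mem (s ^ m) loc v) ↔
      ∃ loc : (i : Fin (n+1)) → (F × Fin m → Fin s) → V i,
        IsOmegaDecomposition (fun p : F × Fin m => mem p.1) s loc v := by
  let E := replicateEquiv F m s
  refine ⟨fun ⟨loc, h⟩ => ⟨_, h.of_equiv E fun _ _ _ => eqOn_replicateEquiv_iff.1⟩,
    fun ⟨loc, h⟩ => ⟨_, h.of_equiv E.symm fun _ β β' hββ' => ?_⟩⟩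
  rw [← E.apply_symm_apply β, ← E.apply_symm_apply β']
  exact eqOn_replicateEquiv_iff.2 hββ'

theorem omegaRank_replicate_le_iff (hfacet : ∀ f : F, ∃ i, mem f i) {m s : ℕ} :
    omegaRank (fun p : F × Fin m => mem p.1) v ≤ s ↔ omegaRank mem v ≤ (s : ℕ∞) ^ m := by
  rw [omegaRank_le_iff (mem := fun p : F × Fin m => mem p.1) fun p => hfacet p.1,
    ← Nat.cast_pow, omegaRank_le_iff hfacet, exists_isOmegaDecomposition_replicate_iff]

end Replicate

theorem omegaRank_replicated_facets_general
    {n : ℕ} {F : Type} [Fintype F] [DecidableEq F]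
    (mem : F → Fin (n+1) → Prop)
    (hfacet : ∀ f : F, ∃ i, mem f i)
    (m : ℕ) (hm : 0 < m)
    {V : Fin (n+1) → Type} [∀ i, AddCommGroup (V i)] [∀ i, Module ℂ (V i)]
    (v : ⨂[ℂ] i, V i) :
    (∀ s : ℕ, omegaRank mem v ≤ ((s : ℕ∞)) ^ m →
        omegaRank (fun p : F × Fin m => mem p.1) v ≤ (s : ℕ∞)) ∧
      omegaRank mem v ≤ (omegaRank (fun p : F × Fin m => mem p.1) v) ^ m := by
  refine ⟨fun s => (omegaRank_replicate_le_iff hfacet).2, ?_⟩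
  by_cases htop : omegaRank (fun p : F × Fin m => mem p.1) v = ⊤
  · rw [htop, ENat.top_pow hm.ne']
    exact le_top
  · obtain ⟨s, hs⟩ := ENat.ne_top_iff_exists.1 htop
    rw [← hs]
    exact (omegaRank_replicate_le_iff hfacet).1 hs.ge

/-- Let `Ω` be a connected wsc and `m ≥ 1`. The wsc `mΩ` has the same simplices but all
facet weights multiplied by `m`, so its facet multiset is `F × Fin m` with the membership
relation ignoring the second component. Then for every `v ∈ V`:
`rank_{mΩ}(v) ≤ ⌈rank_Ω(v)^{1/m}⌉` (expressed as: `rank_{mΩ}(v) ≤ s` for every natural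
number `s` with `rank_Ω(v) ≤ s^m`) and `rank_Ω(v) ≤ rank_{mΩ}(v)^m`. -/
theorem omegaRank_replicated_facets
    {n : ℕ} {F : Type} [Fintype F] [DecidableEq F]
    (mem : F → Fin (n+1) → Prop)
    (hfacet : ∀ f : F, ∃ i, mem f i)
    (hcover : ∀ i : Fin (n+1), ∃ f : F, mem f i)
    (hconn : ∀ i j : Fin (n+1),
      Relation.ReflTransGen (fun a b => ∃ f : F, mem f a ∧ mem f b) i j)
    (m : ℕ) (hm : 0 < m)
    {V : Fin (n+1) → Type} [∀ i, AddCommGroup (V i)] [∀ i, Module ℂ (V i)]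
    (v : ⨂[ℂ] i, V i) :
    (∀ s : ℕ, omegaRank mem v ≤ ((s : ℕ∞)) ^ m →
        omegaRank (fun p : F × Fin m => mem p.1) v ≤ (s : ℕ∞)) ∧
      omegaRank mem v ≤ (omegaRank (fun p : F × Fin m => mem p.1) v) ^ m :=
  omegaRank_replicated_facets_general mem hfacet m hm v
end

section
/- Let G act on the connected wsc Ω, let M ∈ ℂ^{d₀} ⊗ ⋯ ⊗ ℂ^{dₙ}, and let σ be the associated diagonal tensor in Mat_{d₀}(ℂ) ⊗ ⋯ ⊗ Mat_{dₙ}(ℂ). Then rank_{(Ω,G)}(M) = rank_{(Ω,G)}(σ), and the nonnegative (Ω,G)-rank of M equals the separable (Ω,G)-rank of σ. -/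
open PiTensorProduct
open scoped TensorProduct ComplexOrder

/-- An `(Ω,G)`-decomposition of `v` with index set `Fin s` whose local vectors all
satisfy the constraint `P` (e.g. `P = True` for a plain decomposition, entrywise
nonnegativity for a nonnegative decomposition, positive semidefiniteness for a
separable decomposition). -/
def IsOGDecompositionWith {n : ℕ} {F : Type} [Fintype F] [DecidableEq F]
    (G : Type) [Group G] [MulAction G (Fin (n+1))] [MulAction G F]
    (mem : F → Fin (n+1) → Prop)
    {W : Type} [AddCommGroup W] [Module ℂ W] (P : W → Prop)
    (s : ℕ) (loc : Fin (n+1) → (F → Fin s) → W)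
    (v : ⨂[ℂ] _ : Fin (n+1), W) : Prop :=
  (∀ (i : Fin (n+1)) (α α' : F → Fin s),
      (∀ f : F, mem f i → α f = α' f) → loc i α = loc i α') ∧
  (∀ (g : G) (i : Fin (n+1)) (α : F → Fin s),
      loc (g • i) (fun f => α (g⁻¹ • f)) = loc i α) ∧
  (∀ (i : Fin (n+1)) (α : F → Fin s), P (loc i α)) ∧
  v = ∑ α : F → Fin s, ⨂ₜ[ℂ] i, loc i α

/-- The minimal index-set cardinality among `(Ω,G)`-decompositions of `v` whose local
vectors satisfy `P` (`∞` if none exists). -/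
noncomputable def ogRankWith {n : ℕ} {F : Type} [Fintype F] [DecidableEq F]
    (G : Type) [Group G] [MulAction G (Fin (n+1))] [MulAction G F]
    (mem : F → Fin (n+1) → Prop)
    {W : Type} [AddCommGroup W] [Module ℂ W] (P : W → Prop)
    (v : ⨂[ℂ] _ : Fin (n+1), W) : ℕ∞ :=
  sInf {r : ℕ∞ | ∃ s : ℕ, r = (s : ℕ∞) ∧
    ∃ loc : Fin (n+1) → (F → Fin s) → W, IsOGDecompositionWith G mem P s loc v}

/- Applied factorwise, `Matrix.diagonal` sends `M` to `σ` and `Matrix.diag` sends `σ` back to `M`;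
the first carries nonnegative vectors to psd matrices, the second psd matrices to nonnegative
vectors. A linear map applied to every local vector of an `(Ω,G)`-decomposition keeps it local,
`G`-equivariant and on the same index set, so each of the two maps can only lower the rank. -/

section map

variable {n : ℕ} {F : Type} [Fintype F] [DecidableEq F]
  {G : Type} [Group G] [MulAction G (Fin (n+1))] [MulAction G F] {mem : F → Fin (n+1) → Prop}
  {W W' : Type} [AddCommGroup W] [Module ℂ W] [AddCommGroup W'] [Module ℂ W']
  {P : W → Prop} {P' : W' → Prop}

lemma IsOGDecompositionWith.map (L : W →ₗ[ℂ] W') (hL : ∀ w, P w → P' (L w))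
    {s : ℕ} {loc : Fin (n+1) → (F → Fin s) → W} {v : ⨂[ℂ] _ : Fin (n+1), W}
    (h : IsOGDecompositionWith G mem P s loc v) :
    IsOGDecompositionWith G mem P' s (fun i α => L (loc i α)) (map (fun _ => L) v) := by
  obtain ⟨hlocal, hequiv, hP, rfl⟩ := h
  refine ⟨fun i α α' hα => congrArg L (hlocal i α α' hα), fun g i α => congrArg L (hequiv g i α),
    fun i α => hL _ (hP i α), ?_⟩
  simp only [map_sum, map_tprod]

lemma ogRankWith_map_le (L : W →ₗ[ℂ] W') (hL : ∀ w, P w → P' (L w))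
    (v : ⨂[ℂ] _ : Fin (n+1), W) :
    ogRankWith G mem P' (map (fun _ => L) v) ≤ ogRankWith G mem P v := by
  refine sInf_le_sInf ?_
  rintro r ⟨s, rfl, loc, h⟩
  exact ⟨s, rfl, fun i α => L (loc i α), h.map L hL⟩

lemma ogRankWith_eq_of_map_eq (L : W →ₗ[ℂ] W') (L' : W' →ₗ[ℂ] W)
    (hL : ∀ w, P w → P' (L w)) (hL' : ∀ w, P' w → P (L' w))
    {v : ⨂[ℂ] _ : Fin (n+1), W} {v' : ⨂[ℂ] _ : Fin (n+1), W'}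
    (hv' : map (fun _ => L) v = v') (hv : map (fun _ => L') v' = v) :
    ogRankWith G mem P v = ogRankWith G mem P' v' := by
  apply le_antisymm
  · calc ogRankWith G mem P v = ogRankWith G mem P (map (fun _ => L') v') := by rw [hv]
      _ ≤ ogRankWith G mem P' v' := ogRankWith_map_le L' hL' v'
  · calc ogRankWith G mem P' v' = ogRankWith G mem P' (map (fun _ => L) v) := by rw [hv']
      _ ≤ ogRankWith G mem P v := ogRankWith_map_le L hL v

end map

section diagonal

variable {ι κ R : Type} [Fintype ι] [DecidableEq ι] [Fintype κ] [DecidableEq κ] [CommSemiring R]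

lemma map_diagonalLinearMap_sum_tprod_single (m : (ι → κ) → R) :
    map (fun _ => Matrix.diagonalLinearMap κ R R)
        (∑ idx : ι → κ, m idx • ⨂ₜ[R] i, (Pi.single (idx i) 1 : κ → R)) =
      ∑ idx : ι → κ, m idx • ⨂ₜ[R] i, (Matrix.single (idx i) (idx i) 1 : Matrix κ κ R) := by
  simp only [map_sum, map_smul, map_tprod]
  congr! with idx - i
  exact Matrix.diagonal_single (idx i) 1

lemma map_diagLinearMap_sum_tprod_single (m : (ι → κ) → R) :
    map (fun _ => Matrix.diagLinearMap κ R R)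
        (∑ idx : ι → κ, m idx • ⨂ₜ[R] i, (Matrix.single (idx i) (idx i) 1 : Matrix κ κ R)) =
      ∑ idx : ι → κ, m idx • ⨂ₜ[R] i, (Pi.single (idx i) 1 : κ → R) := by
  simp only [map_sum, map_smul, map_tprod]
  congr! with idx - i
  exact Matrix.diag_single_same (i := idx i) (c := (1 : R))

end diagonal

theorem ogRank_and_nnRank_correspondence_general
    {n : ℕ} {F : Type} [Fintype F] [DecidableEq F]
    (G : Type) [Group G] [MulAction G (Fin (n+1))] [MulAction G F]
    (mem : F → Fin (n+1) → Prop)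
    (d : ℕ) (m : (Fin (n+1) → Fin d) → ℂ)
    (M : ⨂[ℂ] _ : Fin (n+1), (Fin d → ℂ))
    (hM : M = ∑ idx : Fin (n+1) → Fin d,
      m idx • ⨂ₜ[ℂ] i, (Pi.single (idx i) 1 : Fin d → ℂ))
    (σ : ⨂[ℂ] _ : Fin (n+1), Matrix (Fin d) (Fin d) ℂ)
    (hσ : σ = ∑ idx : Fin (n+1) → Fin d,
      m idx • ⨂ₜ[ℂ] i, (Matrix.single (idx i) (idx i) 1 : Matrix (Fin d) (Fin d) ℂ)) :
    ogRankWith G mem (fun _ => True) M = ogRankWith G mem (fun _ => True) σ ∧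
    ogRankWith G mem (fun w : Fin d → ℂ => ∀ k, 0 ≤ w k) M =
      ogRankWith G mem (fun A : Matrix (Fin d) (Fin d) ℂ => A.PosSemidef) σ := by
  have hMσ : map (fun _ => Matrix.diagonalLinearMap (Fin d) ℂ ℂ) M = σ := by
    rw [hM, hσ, map_diagonalLinearMap_sum_tprod_single]
  have hσM : map (fun _ => Matrix.diagLinearMap (Fin d) ℂ ℂ) σ = M := by
    rw [hM, hσ, map_diagLinearMap_sum_tprod_single]
  exact ⟨ogRankWith_eq_of_map_eq _ _ (fun _ _ => trivial) (fun _ _ => trivial) hMσ hσM,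
    ogRankWith_eq_of_map_eq _ _ (fun _ hw => Matrix.PosSemidef.diagonal hw)
      (fun _ hA _ => hA.diag_nonneg) hMσ hσM⟩

/-- Let `G` act on the connected wsc `Ω`, let `M ∈ ℂ^d ⊗ ⋯ ⊗ ℂ^d` have coefficients
`m_{i₀…iₙ}` and let `σ = Σ m_{i₀…iₙ} E_{i₀i₀} ⊗ ⋯ ⊗ E_{iₙiₙ}` be the associated
diagonal tensor in `Mat_d(ℂ) ⊗ ⋯ ⊗ Mat_d(ℂ)`. Then
`rank_{(Ω,G)}(M) = rank_{(Ω,G)}(σ)`, and the nonnegative `(Ω,G)`-rank of `M` (all local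
vectors entrywise nonnegative) equals the separable `(Ω,G)`-rank of `σ` (all local
matrices positive semidefinite). -/
theorem ogRank_and_nnRank_correspondence
    {n : ℕ} {F : Type} [Fintype F] [DecidableEq F]
    (G : Type) [Group G] [MulAction G (Fin (n+1))] [MulAction G F]
    (mem : F → Fin (n+1) → Prop)
    (hcompat : ∀ (g : G) (f : F) (i : Fin (n+1)), mem f i → mem (g • f) (g • i))
    (hfacet : ∀ f : F, ∃ i, mem f i)
    (hcover : ∀ i : Fin (n+1), ∃ f : F, mem f i)
    (hconn : ∀ i j : Fin (n+1),
      Relation.ReflTransGen (fun a b => ∃ f : F, mem f a ∧ mem f b) i j)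
    (d : ℕ) (m : (Fin (n+1) → Fin d) → ℂ)
    (M : ⨂[ℂ] _ : Fin (n+1), (Fin d → ℂ))
    (hM : M = ∑ idx : Fin (n+1) → Fin d,
      m idx • ⨂ₜ[ℂ] i, (Pi.single (idx i) 1 : Fin d → ℂ))
    (σ : ⨂[ℂ] _ : Fin (n+1), Matrix (Fin d) (Fin d) ℂ)
    (hσ : σ = ∑ idx : Fin (n+1) → Fin d,
      m idx • ⨂ₜ[ℂ] i, (Matrix.single (idx i) (idx i) 1 : Matrix (Fin d) (Fin d) ℂ)) :
    ogRankWith G mem (fun _ => True) M = ogRankWith G mem (fun _ => True) σ ∧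
    ogRankWith G mem (fun w : Fin d → ℂ => ∀ k, 0 ≤ w k) M =
      ogRankWith G mem (fun A : Matrix (Fin d) (Fin d) ℂ => A.PosSemidef) σ :=
  ogRank_and_nnRank_correspondence_general G mem d m M hM σ hσ
end
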